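/- arXiv:2210.01057 — 2 statements merged into one kernel-verified Lean document; each statement's English description precedes it below -/
import Mathlib

section
/- Let G be an invertible object of a ribbon fusion category with G⊗G ≅ 1 and theta_G^2 = 1, and let A_nu = 1 ⊕ (G ⊠ K^nu) carry its special Frobenius algebra structure in C ⊠ SVect. Then the restriction mu_{GG} of the multiplication to the G-summand satisfies mu_{GG} ∘ sigma_{G-hat,G-hat} = nu · dim(G) · theta_G · mu_{GG}, where G-hat = G ⊠ K^nu. In particular A_nu is commutative if and only if dim(G) · theta_G = nu. -/
open CategoryTheory Category CategoryTheory.Limits MonoidalCategory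

universe v u

/-- A ribbon structure (balancing/twist compatible with braiding) on a braided
monoidal category. -/
class RibbonTwist (C : Type u) [Category.{v} C] [MonoidalCategory C]
    [BraidedCategory C] where
  θ : ∀ X : C, X ≅ X
  naturality : ∀ {X Y : C} (f : X ⟶ Y), (θ X).hom ≫ f = f ≫ (θ Y).hom
  θ_tensor : ∀ X Y : C,
    (θ (X ⊗ Y)).hom = (β_ X Y).hom ≫ (β_ Y X).hom ≫ ((θ X).hom ⊗ₘ (θ Y).hom)
  θ_unit : (θ (𝟙_ C)).hom = 𝟙 (𝟙_ C)

namespace RibbonTwist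

variable {C : Type u} [Category.{v} C] [MonoidalCategory C] [BraidedCategory C]
  [RibbonTwist C]

/-- The categorical (ribbon/quantum) trace of an endomorphism. -/
noncomputable def trC {X : C} [HasRightDual X] (f : X ⟶ X) : 𝟙_ C ⟶ 𝟙_ C :=
  η_ X Xᘁ ≫ ((f ≫ (θ X).hom) ▷ Xᘁ) ≫ (β_ X Xᘁ).hom ≫ ε_ X Xᘁ

/-- The quantum (categorical) dimension of an object. -/
noncomputable def qdim (X : C) [HasRightDual X] : 𝟙_ C ⟶ 𝟙_ C :=
  trC (𝟙 X)

end RibbonTwist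

open RibbonTwist

section Frobenius

variable {C : Type u} [Category.{v} C] [MonoidalCategory C]

/-- A Frobenius algebra structure on a fixed object `A` of a monoidal category. -/
structure FrobeniusOn (A : C) where
  mul : A ⊗ A ⟶ A
  one : 𝟙_ C ⟶ A
  comul : A ⟶ A ⊗ A
  counit : A ⟶ 𝟙_ C
  mul_assoc' : (mul ▷ A) ≫ mul = (α_ A A A).hom ≫ (A ◁ mul) ≫ mul
  one_mul' : (one ▷ A) ≫ mul = (λ_ A).hom
  mul_one' : (A ◁ one) ≫ mul = (ρ_ A).hom
  comul_assoc' : comul ≫ (comul ▷ A) = comul ≫ (A ◁ comul) ≫ (α_ A A A).inv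
  counit_comul' : comul ≫ (counit ▷ A) = (λ_ A).inv
  comul_counit' : comul ≫ (A ◁ counit) = (ρ_ A).inv
  frobenius' : mul ≫ comul = (A ◁ comul) ≫ (α_ A A A).inv ≫ (mul ▷ A)
  frobenius'' : mul ≫ comul = (comul ▷ A) ≫ (α_ A A A).hom ≫ (A ◁ mul)

variable {A : C}

/-- (Normalised) specialness: `μ ∘ Δ = id` and `ε ∘ η ≠ 0`. -/
def FrobeniusOn.IsSpecial [Preadditive C] (F : FrobeniusOn A) : Prop :=
  F.comul ≫ F.mul = 𝟙 A ∧ F.one ≫ F.counit ≠ 0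

/-- The Nakayama automorphism of a Frobenius algebra in a braided category,
built from the copairing `Δ ∘ η`, the pairing `ε ∘ μ` and the braiding; it
measures the failure of the Frobenius pairing to be symmetric. -/
noncomputable def FrobeniusOn.nakayama [BraidedCategory C] (F : FrobeniusOn A) : A ⟶ A :=
  (λ_ A).inv ≫ ((F.one ≫ F.comul) ▷ A) ≫ (α_ A A A).hom ≫
    (A ◁ ((β_ A A).hom ≫ F.mul ≫ F.counit)) ≫ (ρ_ A).hom

/-- The inverse Nakayama automorphism. -/
noncomputable def FrobeniusOn.nakayamaInv [BraidedCategory C] (F : FrobeniusOn A) : A ⟶ A :=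
  (ρ_ A).inv ≫ (A ◁ (F.one ≫ F.comul)) ≫ (α_ A A A).inv ≫
    (((β_ A A).inv ≫ F.mul ≫ F.counit) ▷ A) ≫ (λ_ A).hom

/-- Iterated composition of an endomorphism. -/
noncomputable def FrobeniusOn.powAux (F : FrobeniusOn A) (g : A ⟶ A) : ℕ → (A ⟶ A)
  | 0 => 𝟙 A
  | n + 1 => FrobeniusOn.powAux F g n ≫ g

/-- Integer powers `N^n` of the Nakayama automorphism. -/
noncomputable def FrobeniusOn.nakZpow [BraidedCategory C] (F : FrobeniusOn A) : ℤ → (A ⟶ A)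
  | Int.ofNat n => F.powAux F.nakayama n
  | Int.negSucc n => F.powAux F.nakayamaInv (n + 1)

/-- A bimodule over a Frobenius algebra `F` on `A`. -/
structure BimodOver (F : FrobeniusOn A) where
  X : C
  actLeft : A ⊗ X ⟶ X
  actRight : X ⊗ A ⟶ X
  one_actLeft : (F.one ▷ X) ≫ actLeft = (λ_ X).hom
  actLeft_assoc : (F.mul ▷ X) ≫ actLeft = (α_ A A X).hom ≫ (A ◁ actLeft) ≫ actLeft
  actRight_one : (X ◁ F.one) ≫ actRight = (ρ_ X).hom
  actRight_assoc : (actRight ▷ A) ≫ actRight = (α_ X A A).hom ≫ (X ◁ F.mul) ≫ actRight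
  middle : (actLeft ▷ A) ≫ actRight = (α_ A X A).hom ≫ (A ◁ actRight) ≫ actLeft

/-- The regular bimodule of a Frobenius algebra over itself. -/
noncomputable def FrobeniusOn.regBimod (F : FrobeniusOn A) : BimodOver F where
  X := A
  actLeft := F.mul
  actRight := F.mul
  one_actLeft := F.one_mul'
  actLeft_assoc := F.mul_assoc'
  actRight_one := F.mul_one'
  actRight_assoc := F.mul_assoc'
  middle := F.mul_assoc'

/-- The `in`-going bulk-field projector `Q^{(in)}` (with twist `g`, typically a
power `N^n` of the Nakayama automorphism) acting on morphisms `ψ : W ⟶ M`,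
following the standard TFT bulk-projector diagram: the copairing `Δ ∘ η` of the
algebra is inserted, one leg (twisted by `g`) is braided past the input `W` and
acts on the right of `M`, the other leg acts on the left. -/
noncomputable def Qin [BraidedCategory C] (F : FrobeniusOn A) (M : BimodOver F)
    (g : A ⟶ A) {W : C} (ψ : W ⟶ M.X) : W ⟶ M.X :=
  (λ_ W).inv ≫ ((F.one ≫ F.comul) ▷ W) ≫ (α_ A A W).hom ≫
    (A ◁ (g ▷ W)) ≫ (A ◁ (β_ A W).hom) ≫ (A ◁ (ψ ▷ A)) ≫
    (A ◁ M.actRight) ≫ M.actLeft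

/-- The `out`-going bulk-field projector `Q^{(out)}` acting on morphisms
`φ : M ⟶ W`. -/
noncomputable def Qout [BraidedCategory C] (F : FrobeniusOn A) (M : BimodOver F)
    (g : A ⟶ A) {W : C} (φ : M.X ⟶ W) : M.X ⟶ W :=
  (λ_ M.X).inv ≫ ((F.one ≫ F.comul) ▷ M.X) ≫ (α_ A A M.X).hom ≫
    (A ◁ (g ▷ M.X)) ≫ (A ◁ M.actLeft) ≫ (β_ A M.X).hom ≫ M.actRight ≫ φ

/-- The idempotent on `X ⊗ Y` whose image is the relative tensor product
`X ⊗_A Y` over the (special) Frobenius algebra `A`. -/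
noncomputable def relTensorIdem (F : FrobeniusOn A) (X Y : BimodOver F) :
    X.X ⊗ Y.X ⟶ X.X ⊗ Y.X :=
  (X.X ◁ (λ_ Y.X).inv) ≫ (X.X ◁ ((F.one ≫ F.comul) ▷ Y.X)) ≫
    (X.X ◁ (α_ A A Y.X).hom) ≫ (α_ X.X A (A ⊗ Y.X)).inv ≫
    (X.actRight ⊗ₘ Y.actLeft)

end Frobenius

/-!
Write `A = 𝟙 ⊞ G` and `μ_GG` for the restriction of the multiplication to `G ⊗ G`. Since
`G ⊗ G ≅ 𝟙` and `𝟙` is simple, `G` is simple, and as `G ≇ 𝟙` there are no nonzero maps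
between `G` and `𝟙`. Hence `μ_GG ≠ 0`: otherwise the Frobenius pairing `ε ∘ μ` would vanish
on `A ⊗ G`, which the snake identity with the copairing `Δ ∘ η` forbids. As the self-braiding
of `G` is the scalar `ν d t`, commutativity forces `ν d t = 1`. Conversely, the unit `η` is a
nonzero map `𝟙 ⟶ A`, so the inclusion of `𝟙` factors through it; every component of `μ`
with a `𝟙` factor is then a unitor and commutes with the braiding, while on `G ⊗ G` the
braiding is the identity once `d t = ν`.
-/

section Invertible

variable {C : Type u} [Category.{v} C] [MonoidalCategory C]

noncomputable def tensorRightSelfIso {G : C} (e : G ⊗ G ≅ 𝟙_ C) :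
    tensorRight G ⋙ tensorRight G ≅ 𝟭 C :=
  (tensorRightTensor G G).symm ≪≫ (tensoringRight C).mapIso e ≪≫ rightUnitorNatIso C

noncomputable def tensorRightSelfEquiv {G : C} (e : G ⊗ G ≅ 𝟙_ C) : C ≌ C :=
  .mk (tensorRight G) (tensorRight G) (tensorRightSelfIso e).symm (tensorRightSelfIso e)

theorem simple_of_tensor_self_iso [HasZeroMorphisms C] [Simple (𝟙_ C)] {G : C}
    (e : G ⊗ G ≅ 𝟙_ C) : Simple G := by
  have : (tensorRight G).IsEquivalence := (tensorRightSelfEquiv e).isEquivalence_functor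
  have : Simple (𝟙_ C ⊗ G) := simple_obj (tensorRight G) (𝟙_ C)
  exact Simple.of_iso (λ_ G).symm

end Invertible

theorem hom_eq_zero_of_isEmpty_iso {C : Type u} [Category.{v} C] [Preadditive C] [HasKernels C]
    {X Y : C} [Simple X] [Simple Y] (h : IsEmpty (X ≅ Y)) (f : X ⟶ Y) : f = 0 := by
  by_contra hf
  have := isIso_of_hom_simple hf
  exact h.false (asIso f)

theorem biprod.exists_inl_eq_comp {C : Type u} [Category.{v} C] [Preadditive C] [HasKernels C]
    [HasBinaryBiproducts C] {X Y : C} [Simple X] (η : X ⟶ X ⊞ Y) (hη : η ≠ 0)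
    (hsnd : η ≫ biprod.snd = 0) : ∃ u : X ⟶ X, biprod.inl = u ≫ η := by
  set p := η ≫ biprod.fst
  have hη' : η = p ≫ biprod.inl := by ext <;> simp [p, hsnd]
  have : IsIso p := isIso_of_hom_simple fun hp => hη (by rw [hη', hp, zero_comp])
  exact ⟨inv p, by rw [hη', IsIso.inv_hom_id_assoc]⟩

section BiprodTensor

variable {C : Type u} [Category.{v} C] [Preadditive C] [MonoidalCategory C]
  [MonoidalPreadditive C] [HasBinaryBiproducts C]

theorem biprod.whiskerRight_hom_ext {X Y Z W : C} {f g : (X ⊞ Y) ⊗ Z ⟶ W}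
    (hl : biprod.inl ▷ Z ≫ f = biprod.inl ▷ Z ≫ g)
    (hr : biprod.inr ▷ Z ≫ f = biprod.inr ▷ Z ≫ g) : f = g := by
  rw [← id_comp f, ← id_comp g, ← id_whiskerRight, ← biprod.total,
    MonoidalPreadditive.add_whiskerRight, comp_whiskerRight, comp_whiskerRight]
  simp only [Preadditive.add_comp, assoc, hl, hr]

theorem biprod.whiskerLeft_hom_ext {X Y Z W : C} {f g : Z ⊗ (X ⊞ Y) ⟶ W}
    (hl : Z ◁ biprod.inl ≫ f = Z ◁ biprod.inl ≫ g)
    (hr : Z ◁ biprod.inr ≫ f = Z ◁ biprod.inr ≫ g) : f = g := by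
  rw [← id_comp f, ← id_comp g, ← whiskerLeft_id, ← biprod.total,
    MonoidalPreadditive.whiskerLeft_add, whiskerLeft_comp, whiskerLeft_comp]
  simp only [Preadditive.add_comp, assoc, hl, hr]

theorem biprod.tensor_hom_ext {X Y X' Y' W : C} {f g : (X ⊞ Y) ⊗ (X' ⊞ Y') ⟶ W}
    (hll : (biprod.inl ⊗ₘ biprod.inl) ≫ f = (biprod.inl ⊗ₘ biprod.inl) ≫ g)
    (hlr : (biprod.inl ⊗ₘ biprod.inr) ≫ f = (biprod.inl ⊗ₘ biprod.inr) ≫ g)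
    (hrl : (biprod.inr ⊗ₘ biprod.inl) ≫ f = (biprod.inr ⊗ₘ biprod.inl) ≫ g)
    (hrr : (biprod.inr ⊗ₘ biprod.inr) ≫ f = (biprod.inr ⊗ₘ biprod.inr) ≫ g) : f = g := by
  apply biprod.whiskerRight_hom_ext <;> apply biprod.whiskerLeft_hom_ext <;>
    simpa only [← tensorHom_def'_assoc]

end BiprodTensor

namespace FrobeniusOn

variable {C : Type u} [Category.{v} C] [MonoidalCategory C]

theorem copairing_pairing_zigzag {A : C} (F : FrobeniusOn A) :
    (λ_ A).inv ≫ ((F.one ≫ F.comul) ▷ A) ≫ (α_ A A A).hom ≫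
      (A ◁ (F.mul ≫ F.counit)) ≫ (ρ_ A).hom = 𝟙 A := by
  rw [comp_whiskerRight, MonoidalCategory.whiskerLeft_comp]
  slice_lhs 3 5 => rw [← F.frobenius'']
  slice_lhs 2 3 => rw [F.one_mul']
  slice_lhs 3 4 => rw [F.comul_counit']
  simp

theorem eq_zero_of_pairing_eq_zero [Preadditive C] [MonoidalPreadditive C] {A X : C}
    (F : FrobeniusOn A) {i : X ⟶ A} (h : (A ◁ i) ≫ F.mul ≫ F.counit = 0) : i = 0 := by
  rw [← comp_id i, ← F.copairing_pairing_zigzag, leftUnitor_inv_naturality_assoc,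
    whisker_exchange_assoc, associator_naturality_right_assoc, ← whiskerLeft_comp_assoc, h]
  simp

theorem mul_inr_inr_ne_zero [Preadditive C] [MonoidalPreadditive C] [HasBinaryBiproducts C]
    {X Y : C} (F : FrobeniusOn (X ⊞ Y)) (hXY : ∀ f : X ⊗ Y ⟶ 𝟙_ C, f = 0) (hY : 𝟙 Y ≠ 0) :
    (biprod.inr ⊗ₘ biprod.inr) ≫ F.mul ≠ 0 := by
  intro h
  have hpair : ((X ⊞ Y) ◁ biprod.inr) ≫ F.mul ≫ F.counit = 0 := by
    apply biprod.whiskerRight_hom_ext <;> rw [← tensorHom_def_assoc, comp_zero]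
    · exact hXY _
    · rw [reassoc_of% h, zero_comp]
  exact hY (by rw [← biprod.inr_snd, F.eq_zero_of_pairing_eq_zero hpair, zero_comp])

variable {A X Y : C} (F : FrobeniusOn A)

theorem one_tensorHom_mul (f : X ⟶ A) : (F.one ⊗ₘ f) ≫ F.mul = (λ_ X).hom ≫ f := by
  rw [tensorHom_def'_assoc, F.one_mul', leftUnitor_naturality]

theorem tensorHom_one_mul (f : X ⟶ A) : (f ⊗ₘ F.one) ≫ F.mul = (ρ_ X).hom ≫ f := by
  rw [tensorHom_def_assoc, F.mul_one', rightUnitor_naturality]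

variable [BraidedCategory C]

theorem braiding_tensorHom_comp_one_mul (f : X ⟶ A) (u : Y ⟶ 𝟙_ C) :
    (β_ Y X).hom ≫ (f ⊗ₘ (u ≫ F.one)) ≫ F.mul = ((u ≫ F.one) ⊗ₘ f) ≫ F.mul := by
  rw [← id_comp f, ← tensorHom_comp_tensorHom, ← tensorHom_comp_tensorHom, assoc, assoc,
    tensorHom_one_mul, one_tensorHom_mul, id_tensorHom, tensorHom_id,
    ← BraidedCategory.braiding_naturality_left_assoc, braiding_tensorUnit_left]
  simp

theorem braiding_one_comp_tensorHom_mul (f : X ⟶ A) (u : Y ⟶ 𝟙_ C) :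
    (β_ X Y).hom ≫ ((u ≫ F.one) ⊗ₘ f) ≫ F.mul = (f ⊗ₘ (u ≫ F.one)) ≫ F.mul := by
  rw [← id_comp f, ← tensorHom_comp_tensorHom, ← tensorHom_comp_tensorHom, assoc, assoc,
    tensorHom_one_mul, one_tensorHom_mul, id_tensorHom, tensorHom_id,
    ← BraidedCategory.braiding_naturality_right_assoc, braiding_tensorUnit_right]
  simp

theorem braiding_mul_eq_mul_of_inl_eq [Preadditive C] [MonoidalPreadditive C]
    [HasBinaryBiproducts C] {X Y : C} (F : FrobeniusOn (X ⊞ Y)) (u : X ⟶ 𝟙_ C)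
    (hu : biprod.inl = u ≫ F.one)
    (hY : (β_ Y Y).hom ≫ (biprod.inr ⊗ₘ biprod.inr) ≫ F.mul =
      (biprod.inr ⊗ₘ biprod.inr) ≫ F.mul) :
    (β_ (X ⊞ Y) (X ⊞ Y)).hom ≫ F.mul = F.mul := by
  apply biprod.tensor_hom_ext <;> rw [BraidedCategory.braiding_naturality_assoc]
  · rw [hu, braiding_tensorHom_comp_one_mul]
  · rw [hu, braiding_tensorHom_comp_one_mul]
  · rw [hu, braiding_one_comp_tensorHom_mul]
  · exact hY

end FrobeniusOn

theorem mulGG_selfbraiding_and_commutativity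
    {C : Type u} [Category.{v} C] [MonoidalCategory C]
    [BraidedCategory C] [RightRigidCategory C] [RibbonTwist C]
    [Preadditive C] [CategoryTheory.Linear ℂ C] [MonoidalPreadditive C]
    [MonoidalLinear ℂ C] [HasKernels C] [HasBinaryBiproducts C]
    [∀ X Y : C, FiniteDimensional ℂ (X ⟶ Y)]
    (hunit : Simple (𝟙_ C))
    (G : C) (e : G ⊗ G ≅ 𝟙_ C) (hne : IsEmpty (G ≅ 𝟙_ C))
    (ν d t : ℂ) (hν : ν = 1 ∨ ν = -1) (hd : d = 1 ∨ d = -1)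
    (ht2 : t = 1 ∨ t = -1)
    (ht : (RibbonTwist.θ G).hom = t • 𝟙 G)
    (hqd : qdim G = (ν * d) • 𝟙 (𝟙_ C))
    (hb : (β_ G G).hom = (ν * d * t) • 𝟙 (G ⊗ G))
    (F : FrobeniusOn (𝟙_ C ⊞ G)) (hF : F.IsSpecial) :
    (β_ G G).hom ≫ (((biprod.inr : G ⟶ 𝟙_ C ⊞ G) ⊗ₘ (biprod.inr : G ⟶ 𝟙_ C ⊞ G)) ≫ F.mul) =
      (ν * d * t) • (((biprod.inr : G ⟶ 𝟙_ C ⊞ G) ⊗ₘ (biprod.inr : G ⟶ 𝟙_ C ⊞ G)) ≫ F.mul) ∧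
    (((β_ (𝟙_ C ⊞ G) (𝟙_ C ⊞ G)).hom ≫ F.mul = F.mul) ↔ d * t = ν) := by
  have : Simple G := simple_of_tensor_self_iso e
  have hG1 : ∀ f : G ⟶ 𝟙_ C, f = 0 := hom_eq_zero_of_isEmpty_iso hne
  have h1G : ∀ f : 𝟙_ C ⟶ G, f = 0 := hom_eq_zero_of_isEmpty_iso ⟨fun i => hne.false i.symm⟩
  have h1G1 : ∀ f : 𝟙_ C ⊗ G ⟶ 𝟙_ C, f = 0 := fun f => by
    rw [← (λ_ G).hom_inv_id_assoc f, hG1 ((λ_ G).inv ≫ f), comp_zero]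
  have hν2 : ν * ν = 1 := by rcases hν with rfl | rfl <;> norm_num
  have hswap : (β_ G G).hom ≫ (biprod.inr ⊗ₘ biprod.inr) ≫ F.mul =
      (ν * d * t) • ((biprod.inr ⊗ₘ biprod.inr) ≫ F.mul) := by
    rw [hb, Linear.smul_comp, id_comp]
  refine ⟨hswap, fun hcomm => ?_, fun hdt => ?_⟩
  · have hμ := F.mul_inr_inr_ne_zero h1G1 (id_nonzero G)
    have h1 : ν * d * t = 1 := smul_left_injective ℂ hμ <| by
      dsimp only
      rw [one_smul, ← hswap, ← BraidedCategory.braiding_naturality_assoc, hcomm]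
    linear_combination ν * h1 - d * t * hν2
  · obtain ⟨u, hu⟩ := biprod.exists_inl_eq_comp F.one
      (fun h => hF.2 (by rw [h, zero_comp])) (h1G _)
    refine F.braiding_mul_eq_mul_of_inl_eq u hu ?_
    rw [hb, mul_assoc, hdt, hν2, one_smul, id_comp]
end

section
/- For the algebra F = 1 ⊕ Π1 = Cl_1 in SVect (viewed as C-hat for the trivial modular category C = Vect), the spin CFT defined by F has exactly one parity-even bulk field in the Neveu-Schwarz sector and one parity-odd bulk field in the Ramond sector (and no other bulk fields), and its torus partition functions for the four spin structures are Z^{NS,NS} = Z^{NS,R} = Z^{R,NS} = 1 and Z^{R,R} = −1; i.e. the resulting 2d spin TFT computes the Arf invariant of the spin structure. -/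
open TensorProduct

noncomputable section

/-!
STATEMENT 5.  The Clifford algebra `Cl₁ = ℂ^{1|1}` in one odd generator `θ`
with `θ² = 1`, with counit `ε(1) = 2`, `ε(θ) = 0` and coproduct
`Δ(1) = ½(1⊗1 + θ⊗θ)`, `Δ(θ) = ½(1⊗θ + θ⊗1)`, is a special Frobenius algebra
in `SVect` whose Nakayama automorphism `N` satisfies `N(1) = 1` and
`N(θ) = -θ`; in particular `N² = id` but `N ≠ id`, the super-dimension of
`Cl₁` is `0`, and `ε ∘ η = 2`.

We model `Cl₁` as `ℂ × ℂ` with even part `ℂ·1` (first coordinate) and odd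
part `ℂ·θ` (second coordinate); the Koszul braiding of `SVect` is encoded in
the signed flip `braid` below, and the Nakayama automorphism is the canonical
composite built from the copairing `Δ ∘ η`, the pairing `ε ∘ μ` and the
braiding.
-/

/-- The Clifford algebra `Cl₁` as a super-vector space: even part spanned by
`1 = (1,0)`, odd part spanned by `θ = (0,1)`. -/
abbrev Cl : Type := ℂ × ℂ

/-- Multiplication of `Cl₁` as a bilinear map:
`(a·1 + b·θ)(c·1 + d·θ) = (ac + bd)·1 + (ad + bc)·θ`. -/
def mulB : Cl →ₗ[ℂ] Cl →ₗ[ℂ] Cl :=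
  LinearMap.mk₂ ℂ (fun x y => (x.1 * y.1 + x.2 * y.2, x.1 * y.2 + x.2 * y.1))
    (by intro m₁ m₂ n; simp [Prod.ext_iff]; constructor <;> ring)
    (by intro c m n; simp [Prod.ext_iff, Prod.smul_def, smul_eq_mul]; constructor <;> ring)
    (by intro m n₁ n₂; simp [Prod.ext_iff]; constructor <;> ring)
    (by intro c m n; simp [Prod.ext_iff, Prod.smul_def, smul_eq_mul]; constructor <;> ring)

/-- Multiplication `μ : Cl ⊗ Cl → Cl`. -/
def mulMap : Cl ⊗[ℂ] Cl →ₗ[ℂ] Cl := TensorProduct.lift mulB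

/-- Unit `η : ℂ → Cl`, `1 ↦ 1`. -/
def unitMap : ℂ →ₗ[ℂ] Cl := LinearMap.toSpanSingleton ℂ Cl ((1 : ℂ), (0 : ℂ))

/-- Counit `ε : Cl → ℂ`, `ε(a·1 + b·θ) = 2a`. -/
def counitMap : Cl →ₗ[ℂ] ℂ := (2 : ℂ) • LinearMap.fst ℂ ℂ ℂ

/-- Coproduct `Δ : Cl → Cl ⊗ Cl`. -/
def comulMap : Cl →ₗ[ℂ] Cl ⊗[ℂ] Cl :=
  LinearMap.coprod
    (LinearMap.toSpanSingleton ℂ (Cl ⊗[ℂ] Cl)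
      ((1 / 2 : ℂ) • (((1 : ℂ), (0 : ℂ)) ⊗ₜ[ℂ] ((1 : ℂ), (0 : ℂ)) +
        ((0 : ℂ), (1 : ℂ)) ⊗ₜ[ℂ] ((0 : ℂ), (1 : ℂ)))))
    (LinearMap.toSpanSingleton ℂ (Cl ⊗[ℂ] Cl)
      ((1 / 2 : ℂ) • (((1 : ℂ), (0 : ℂ)) ⊗ₜ[ℂ] ((0 : ℂ), (1 : ℂ)) +
        ((0 : ℂ), (1 : ℂ)) ⊗ₜ[ℂ] ((1 : ℂ), (0 : ℂ)))))

/-- The parity projection onto the odd part of `Cl`. -/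
def podd : Cl →ₗ[ℂ] Cl := (LinearMap.inr ℂ ℂ ℂ) ∘ₗ (LinearMap.snd ℂ ℂ ℂ)

/-- The Koszul braiding of `SVect` on `Cl ⊗ Cl`:
`σ(x ⊗ y) = (-1)^{|x||y|} y ⊗ x`, i.e. the flip composed with a sign `-1` on
the odd⊗odd component. -/
def braid : Cl ⊗[ℂ] Cl →ₗ[ℂ] Cl ⊗[ℂ] Cl :=
  (TensorProduct.comm ℂ Cl Cl).toLinearMap ∘ₗ
    (LinearMap.id - (2 : ℂ) • TensorProduct.map podd podd)

/-- The Nakayama automorphism of `Cl₁`, as the canonical composite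
`N = (id ⊗ (ε ∘ μ ∘ σ)) ∘ assoc ∘ ((Δ ∘ η) ⊗ id)` built from the copairing,
the pairing and the Koszul braiding. -/
def nakayamaMap : Cl →ₗ[ℂ] Cl :=
  (TensorProduct.rid ℂ Cl).toLinearMap ∘ₗ
    (LinearMap.lTensor Cl (counitMap ∘ₗ mulMap ∘ₗ braid)) ∘ₗ
    (TensorProduct.assoc ℂ Cl Cl Cl).toLinearMap ∘ₗ
    (LinearMap.rTensor Cl (comulMap ∘ₗ unitMap)) ∘ₗ
    (TensorProduct.lid ℂ Cl).symm.toLinearMap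

/-!
STATEMENT 19.  For the algebra `F = 𝟙 ⊕ Π𝟙 = Cl₁` in `SVect` (viewed as
`C-hat` for the trivial modular category `C = Vect`), the spin CFT defined by
`F` has exactly one parity-even bulk field in the Neveu–Schwarz sector and one
parity-odd bulk field in the Ramond sector (and no other bulk fields), and its
torus partition functions for the four spin structures are
`Z^{NS,NS} = Z^{NS,R} = Z^{R,NS} = 1` and `Z^{R,R} = -1`, i.e. the resulting
2d spin TFT computes the Arf invariant of the spin structure.

Bulk fields of type `y ∈ {0 (NS), 1 (R)}` and parity `ε` are the image of the
idempotent `Q_y^{(in)}` on `Hom_{SVect}(K^ε, Cl₁)` ≅ (the parity-`ε` part of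
`Cl₁`); `Q_y^{(in)}` inserts the copairing `Δ∘η = ½(1⊗1 + θ⊗θ)`, braids one
leg past the parity-`ε` input (Koszul sign `(-1)^{|f|ε}`), applies `N^y` to it
and multiplies from both sides.  The spin-torus coefficient with holonomies
`(s,t)` is the super-trace of `N^{-t} ∘ Q_{1-s}^{(in)}` over the two parity
sectors (Prop. 5.13).
-/

/-- `N^t` for `t : ℤ/2` (recall `N² = id`, so `N^{-t} = N^t`). -/
def Npow (t : ZMod 2) : Cl →ₗ[ℂ] Cl :=
  if t = 0 then LinearMap.id else nakayamaMap

/-- The Koszul sign `(-1)^{|θ|·ε}` picked up when braiding the odd generator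
past a parity-`ε` input. -/
def koszulSign (ε : ZMod 2) : ℂ := if ε = 0 then 1 else -1

/-- Left multiplication by a fixed element. -/
def Lmul (a : Cl) : Cl →ₗ[ℂ] Cl := mulB a

/-- Right multiplication by a fixed element. -/
def Rmul (a : Cl) : Cl →ₗ[ℂ] Cl := mulB.flip a

/-- The bulk idempotent `Q_y^{(in)}` of type `y` acting on the parity-`ε`
fields: `Q(v) = ½ Σ_{f ∈ {1,θ}} (-1)^{|f|ε} · f · (v · N^y(f))`. -/
def Qbulk (y ε : ZMod 2) : Cl →ₗ[ℂ] Cl :=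
  (1 / 2 : ℂ) •
    (Lmul ((1 : ℂ), (0 : ℂ)) ∘ₗ Rmul (Npow y ((1 : ℂ), (0 : ℂ))) +
      koszulSign ε • (Lmul ((0 : ℂ), (1 : ℂ)) ∘ₗ Rmul (Npow y ((0 : ℂ), (1 : ℂ)))))

/-- The parity-`ε` part of `Cl₁`, i.e. `Hom_{SVect}(K^ε, Cl₁)`. -/
def parityPart (ε : ZMod 2) : Submodule ℂ Cl :=
  if ε = 0 then LinearMap.range (LinearMap.inl ℂ ℂ ℂ)
  else LinearMap.range (LinearMap.inr ℂ ℂ ℂ)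

/-- The space of bulk fields of type `y` (0 = NS, 1 = R) and parity `ε`:
the image of `Q_y^{(in)}` on the parity-`ε` fields. -/
def bulkFields (y ε : ZMod 2) : Submodule ℂ Cl :=
  Submodule.map (Qbulk y ε) (parityPart ε)

/-- The projection of `Cl` onto its parity-`ε` part. -/
def parityProj (ε : ZMod 2) : Cl →ₗ[ℂ] Cl :=
  if ε = 0 then (LinearMap.inl ℂ ℂ ℂ) ∘ₗ (LinearMap.fst ℂ ℂ ℂ)
  else (LinearMap.inr ℂ ℂ ℂ) ∘ₗ (LinearMap.snd ℂ ℂ ℂ)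

/-- The torus partition function for the spin structure with holonomies
`(s,t) ∈ (ℤ/2)²`: the super-trace (trace on the even sector minus trace on
the odd sector) of `N^{-t} ∘ Q_{1-s}^{(in)}`. -/
def Ztorus (s t : ZMod 2) : ℂ :=
  LinearMap.trace ℂ Cl (Npow t ∘ₗ Qbulk (1 - s) 0 ∘ₗ parityProj 0) -
    LinearMap.trace ℂ Cl (Npow t ∘ₗ Qbulk (1 - s) 1 ∘ₗ parityProj 1)

lemma zmod_one_ne_zero : (1 : ZMod 2) ≠ 0 := by decide

lemma nakayama_apply (x : Cl) : nakayamaMap x = (x.1, -x.2) := by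
  simp [nakayamaMap, comulMap, unitMap, counitMap, mulMap, braid, podd,
    TensorProduct.smul_tmul', TensorProduct.tmul_add, TensorProduct.add_tmul,
    Prod.ext_iff, smul_eq_mul, mulB]
  constructor <;> ring

lemma Qbulk_00 : Qbulk 0 0 = LinearMap.id := by
  ext x <;>
    simp [Qbulk, Npow, koszulSign, Lmul, Rmul, mulB, Prod.ext_iff, smul_eq_mul] <;> ring

lemma Qbulk_01 : Qbulk 0 1 = 0 := by
  ext x <;>
    simp [Qbulk, Npow, koszulSign, Lmul, Rmul, mulB, Prod.ext_iff, smul_eq_mul,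
      zmod_one_ne_zero] <;> ring

lemma Qbulk_10 : Qbulk 1 0 = 0 := by
  ext x <;>
    simp [Qbulk, Npow, koszulSign, Lmul, Rmul, mulB, Prod.ext_iff, smul_eq_mul,
      zmod_one_ne_zero, nakayama_apply] <;> ring

lemma Qbulk_11 : Qbulk 1 1 = LinearMap.id := by
  ext x <;>
    simp [Qbulk, Npow, koszulSign, Lmul, Rmul, mulB, Prod.ext_iff, smul_eq_mul,
      zmod_one_ne_zero, nakayama_apply] <;> ring

lemma inl_eq : (LinearMap.inl ℂ ℂ ℂ) = LinearMap.toSpanSingleton ℂ Cl ((1 : ℂ), (0 : ℂ)) := by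
  ext x <;> simp [LinearMap.toSpanSingleton_apply, Prod.smul_def]

lemma inr_eq : (LinearMap.inr ℂ ℂ ℂ) = LinearMap.toSpanSingleton ℂ Cl ((0 : ℂ), (1 : ℂ)) := by
  ext x <;> simp [LinearMap.toSpanSingleton_apply, Prod.smul_def]

lemma parityPart_zero : parityPart 0 = Submodule.span ℂ {((1 : ℂ), (0 : ℂ))} := by
  rw [parityPart, if_pos rfl, inl_eq, LinearMap.span_singleton_eq_range]

lemma parityPart_one : parityPart 1 = Submodule.span ℂ {((0 : ℂ), (1 : ℂ))} := by
  rw [parityPart, if_neg zmod_one_ne_zero, inr_eq, LinearMap.span_singleton_eq_range]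

lemma trace_proj0 (t : ZMod 2) :
    LinearMap.trace ℂ Cl (Npow t ∘ₗ LinearMap.id ∘ₗ parityProj 0) = 1 := by
  have h : Npow t ∘ₗ LinearMap.id ∘ₗ parityProj 0 =
      LinearMap.prodMap (LinearMap.id : ℂ →ₗ[ℂ] ℂ) 0 := by
    ext x <;> unfold Npow <;> split <;>
      simp [parityProj, nakayama_apply]
  rw [h, LinearMap.trace_prodMap', LinearMap.trace_id, map_zero]
  simp

lemma trace_proj1_0 :
    LinearMap.trace ℂ Cl (Npow 0 ∘ₗ LinearMap.id ∘ₗ parityProj 1) = 1 := by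
  have h : Npow 0 ∘ₗ LinearMap.id ∘ₗ parityProj 1 =
      LinearMap.prodMap (0 : ℂ →ₗ[ℂ] ℂ) LinearMap.id := by
    ext x <;> simp [Npow, parityProj, zmod_one_ne_zero]
  rw [h, LinearMap.trace_prodMap', LinearMap.trace_id, map_zero]
  simp

lemma trace_proj1_1 :
    LinearMap.trace ℂ Cl (Npow 1 ∘ₗ LinearMap.id ∘ₗ parityProj 1) = -1 := by
  have h : Npow 1 ∘ₗ LinearMap.id ∘ₗ parityProj 1 =
      LinearMap.prodMap (0 : ℂ →ₗ[ℂ] ℂ) (-LinearMap.id) := by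
    ext x <;> simp [Npow, parityProj, zmod_one_ne_zero, nakayama_apply]
  rw [h, LinearMap.trace_prodMap', map_neg, LinearMap.trace_id, map_zero]
  simp

/-- the Arf spin TFT.  The spin theory of `F = Cl₁` has
exactly one parity-even NS bulk field and one parity-odd R bulk field and no
others, and its four torus partition functions are
`Z^{NS,NS} = Z^{NS,R} = Z^{R,NS} = 1`, `Z^{R,R} = -1` (the Arf invariant);
here `(s,t) = (1,1), (1,0), (0,1), (0,0)` are the holonomies corresponding to
the `(NS,NS), (NS,R), (R,NS), (R,R)` spin structures. -/
theorem cl1_arf_theory :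
    Module.finrank ℂ ↥(bulkFields 0 0) = 1 ∧
    bulkFields 0 1 = ⊥ ∧
    bulkFields 1 0 = ⊥ ∧
    Module.finrank ℂ ↥(bulkFields 1 1) = 1 ∧
    Ztorus 1 1 = 1 ∧
    Ztorus 1 0 = 1 ∧
    Ztorus 0 1 = 1 ∧
    Ztorus 0 0 = -1 := by
  have h10 : (1 - 1 : ZMod 2) = 0 := by decide
  have h01 : (1 - 0 : ZMod 2) = 1 := by decide
  refine ⟨?_, ?_, ?_, ?_, ?_, ?_, ?_, ?_⟩
  · rw [bulkFields, Qbulk_00, Submodule.map_id, parityPart_zero]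
    exact finrank_span_singleton (by simp [Prod.ext_iff])
  · rw [bulkFields, Qbulk_01, Submodule.map_zero]
  · rw [bulkFields, Qbulk_10, Submodule.map_zero]
  · rw [bulkFields, Qbulk_11, Submodule.map_id, parityPart_one]
    exact finrank_span_singleton (by simp [Prod.ext_iff])
  · rw [Ztorus, h10, Qbulk_00, Qbulk_01, LinearMap.zero_comp, LinearMap.comp_zero,
      map_zero, sub_zero, trace_proj0]
  · rw [Ztorus, h10, Qbulk_00, Qbulk_01, LinearMap.zero_comp, LinearMap.comp_zero,
      map_zero, sub_zero, trace_proj0]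
  · rw [Ztorus, h01, Qbulk_10, Qbulk_11, LinearMap.zero_comp, LinearMap.comp_zero,
      map_zero, zero_sub, trace_proj1_1]
    norm_num
  · rw [Ztorus, h01, Qbulk_10, Qbulk_11, LinearMap.zero_comp, LinearMap.comp_zero,
      map_zero, zero_sub, trace_proj1_0]

end
end
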